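/- arXiv:1708.01453 — 4 statements merged into one kernel-verified Lean document; each statement's English description precedes it below -/
import Mathlib

section
/- Generalized orthogonality of the force decomposition (Lemma 1): for an irreducible finite Markov chain with invariant measure π > 0 and density ρ > 0, defining F^S_{xy}(ρ) = −(log(ρ(y)/π(y)) − log(ρ(x)/π(x))), F^A_{xy} = log(q_{xy}/q_{yx}) with q_{xy} = π(x) r_{xy}, and a_{xy}(ρ) = 2√(ρ(x) r_{xy} ρ(y) r_{yx}), one has ∑_{xy} sinh(F^S_{xy}(ρ)/2) · a_{xy}(ρ) · sinh(F^A_{xy}/2) = 0, where the sum is over directed edges xy with r_{xy} > 0. -/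
/-!
With `u = ρ / π` and `q x y = π x * r x y`, the activity factors as `a = 2 √(u x u y) √(q x y q y x)`,
and `sinh (log (s / t) / 2) √(s t) = (s - t) / 2` turns each summand into
`(u x - u y) (q x y - q y x) / 2` (both sides vanish on non-edges). This is a gradient paired with
the flux `q x y - q y x`, whose row and column sums vanish by invariance of `π`, so the sum is zero.
-/

open Finset

section

open Real

/-- `x ^ 2 / y ^ 2 = (x / y) ^ 2` turns the half-logarithm into `log (√u / √v)`, whose `sinh` is
`(√u / √v - √v / √u) / 2`. -/
lemma sinh_half_log_div_mul_sqrt {u v : ℝ} (hu : 0 < u) (hv : 0 < v) :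
    sinh (log (u / v) / 2) * √(u * v) = (u - v) / 2 := by
  obtain ⟨a, ha, rfl⟩ : ∃ a, 0 < a ∧ a ^ 2 = u := ⟨√u, sqrt_pos.2 hu, sq_sqrt hu.le⟩
  obtain ⟨b, hb, rfl⟩ : ∃ b, 0 < b ∧ b ^ 2 = v := ⟨√v, sqrt_pos.2 hv, sq_sqrt hv.le⟩
  have hlog : log (a ^ 2 / b ^ 2) / 2 = log (a / b) := by
    rw [← div_pow, log_pow]; ring
  rw [hlog, sinh_log (by positivity), ← mul_pow, sqrt_sq (by positivity)]
  field_simp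

lemma sinh_half_log_div_mul_sqrt_mul_sinh {u v q p : ℝ} (hu : 0 < u) (hv : 0 < v) (hq : 0 < q)
    (hp : 0 < p) :
    sinh (log (u / v) / 2) * (2 * √(u * v * (q * p))) * sinh (log (q / p) / 2) =
      (u - v) * (q - p) / 2 := by
  rw [sqrt_mul (by positivity)]
  calc _ = 2 * (sinh (log (u / v) / 2) * √(u * v)) * (sinh (log (q / p) / 2) * √(q * p)) := by
        ring
    _ = _ := by
        rw [sinh_half_log_div_mul_sqrt hu hv, sinh_half_log_div_mul_sqrt hq hp]
        ring

lemma sinh_force_mul_activity_mul_sinh_force {ρx ρy πx πy rxy ryx : ℝ} (hρx : 0 < ρx)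
    (hρy : 0 < ρy) (hπx : 0 < πx) (hπy : 0 < πy) (hrxy : 0 ≤ rxy) (hryx : 0 ≤ ryx)
    (hsym : 0 < rxy ↔ 0 < ryx) :
    sinh ((-(log (ρy / πy) - log (ρx / πx))) / 2) * (2 * √(ρx * rxy * (ρy * ryx))) *
        sinh (log ((πx * rxy) / (πy * ryx)) / 2) =
      (ρx / πx - ρy / πy) * (πx * rxy - πy * ryx) / 2 := by
  rcases hrxy.eq_or_lt with hzero | hpos
  · have hryx0 : ryx = 0 := le_antisymm (not_lt.1 (mt hsym.2 hzero.not_lt)) hryx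
    simp [← hzero, hryx0]
  · have hforce : -(log (ρy / πy) - log (ρx / πx)) = log ((ρx / πx) / (ρy / πy)) := by
      rw [neg_sub, ← log_div (by positivity) (by positivity)]
    have hactivity : ρx * rxy * (ρy * ryx) = ρx / πx * (ρy / πy) * (πx * rxy * (πy * ryx)) := by
      field_simp
    rw [hforce, hactivity, sinh_half_log_div_mul_sqrt_mul_sinh (by positivity) (by positivity)
      (by positivity) (mul_pos hπy (hsym.1 hpos))]

end

lemma sum_sum_sub_mul_eq_zero {V R : Type*} [Fintype V] [CommRing R] (u : V → R)
    (j : V → V → R) (hrow : ∀ x, ∑ y, j x y = 0) (hcol : ∀ y, ∑ x, j x y = 0) :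
    ∑ x, ∑ y, (u x - u y) * j x y = 0 := by
  calc _ = ∑ x, u x * ∑ y, j x y - ∑ y, u y * ∑ x, j x y := by
        simp only [sub_mul, sum_sub_distrib, mul_sum]
        rw [sum_comm (f := fun x y => u y * j x y)]
    _ = 0 := by simp [hrow, hcol]

/-- Lemma 1 (generalised orthogonality): for a finite Markov chain with invariant
probability measure `π > 0` and density `ρ > 0`, with
`F^S x y = -(log (ρ y / π y) - log (ρ x / π x))`, `F^A x y = log (q x y / q y x)`
(`q x y = π x * r x y`) and `a x y = 2 √(ρ x * r x y * ρ y * r y x)`, one has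
`∑_{xy} sinh (F^S/2) * a * sinh (F^A/2) = 0`. -/
theorem generalized_orthogonality_sum {V : Type*} [Fintype V]
    (r : V → V → ℝ) (π ρ : V → ℝ)
    (hr : ∀ x y, 0 ≤ r x y) (hsym : ∀ x y, 0 < r x y ↔ 0 < r y x)
    (hπpos : ∀ x, 0 < π x) (hρpos : ∀ x, 0 < ρ x)
    (hinv : ∀ x, ∑ y, π x * r x y = ∑ y, π y * r y x) :
    ∑ x, ∑ y,
      Real.sinh ((-(Real.log (ρ y / π y) - Real.log (ρ x / π x))) / 2) *
        (2 * Real.sqrt (ρ x * r x y * (ρ y * r y x))) *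
        Real.sinh (Real.log ((π x * r x y) / (π y * r y x)) / 2) = 0 := by
  have hedge : ∀ x y, _ := fun x y =>
    sinh_force_mul_activity_mul_sinh_force (hρpos x) (hρpos y) (hπpos x) (hπpos y) (hr x y)
      (hr y x) (hsym x y)
  simp only [hedge, ← sum_div]
  rw [sum_sum_sub_mul_eq_zero _ _ (fun x => by rw [sum_sub_distrib, hinv, sub_self])
    (fun y => by rw [sum_sub_distrib, hinv, sub_self]), zero_div]
end

section
/- Splitting of Ψ* (Lemma 2): under the setting of Lemma 1, with Ψ*(ρ, f) = ∑_{xy} a_{xy}(ρ)(cosh(f_{xy}/2) − 1), Ψ*_S(ρ, f) = ∑_{xy} a^S_{xy}(ρ)(cosh(f_{xy}/2) − 1) where a^S_{xy}(ρ) = a_{xy}(ρ) cosh(F^A_{xy}/2), and F(ρ) = F^S(ρ) + F^A, one has Ψ*(ρ, F(ρ)) = Ψ*_S(ρ, F^S(ρ)) + Ψ*(ρ, F^A). -/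
/-!
Expanding `cosh ((F^S + F^A) / 2)` by the addition formula splits each summand of `Ψ*(ρ, F(ρ))`
into the two summands on the right plus a cross term `a sinh (F^S / 2) sinh (F^A / 2)`.
For positive `A, B` one has `2 √(A B) sinh (log (A / B) / 2) = A - B`, so the cross term equals
`(ρ(x)/π(x) - ρ(y)/π(y)) (π(x) r_{xy} - π(y) r_{yx}) / 2`: a gradient paired with the
antisymmetric part of the stationary flux `π(x) r_{xy}`. Its sum vanishes because that flux is
divergence free, which is exactly the invariance of `π`.
-/

open Finset

theorem Real.two_mul_sqrt_mul_mul_sinh_half_log_div {A B : ℝ} (hA : 0 < A) (hB : 0 < B) :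
    2 * √(A * B) * Real.sinh (Real.log (A / B) / 2) = A - B := by
  have hsA : 0 < √A := Real.sqrt_pos.mpr hA
  have hsB : 0 < √B := Real.sqrt_pos.mpr hB
  rw [← Real.log_sqrt (div_pos hA hB).le, Real.sqrt_div hA.le, Real.sinh_log (div_pos hsA hsB),
    Real.sqrt_mul hA.le, inv_div]
  field_simp
  rw [Real.sq_sqrt hA.le, Real.sq_sqrt hB.le]

theorem Real.two_mul_sqrt_mul_sinh_mul_sinh_half_log {p q b c u v : ℝ}
    (hp : 0 < p) (hq : 0 < q) (hb : 0 < b) (hc : 0 < c) (hu : 0 ≤ u) (hv : 0 ≤ v)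
    (huv : 0 < u ↔ 0 < v) :
    2 * √(p * u * (q * v)) * Real.sinh (Real.log (p * c / (q * b)) / 2) *
        Real.sinh (Real.log (b * u / (c * v)) / 2) =
      (p / b - q / c) * (b * u - c * v) / 2 := by
  rcases hu.eq_or_lt with rfl | hu
  · obtain rfl : v = 0 := by by_contra hv0; exact (huv.mpr (hv.lt_of_ne' hv0)).false
    simp
  have hv := huv.mp hu
  have hS := Real.two_mul_sqrt_mul_mul_sinh_half_log_div (mul_pos hp hc) (mul_pos hq hb)
  have hA := Real.two_mul_sqrt_mul_mul_sinh_half_log_div (mul_pos hb hu) (mul_pos hc hv)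
  have hsqrt : √(p * c * (q * b)) * √(b * u * (c * v)) = b * c * √(p * u * (q * v)) := by
    rw [← Real.sqrt_mul (by positivity), ← Real.sqrt_sq (mul_pos hb hc).le,
      ← Real.sqrt_mul (by positivity)]
    ring_nf
  rw [show (p / b - q / c) * (b * u - c * v) / 2 = (p * c - q * b) * (b * u - c * v) / (2 * (b * c))
      by field_simp, eq_div_iff (by positivity), ← hS, ← hA]
  linear_combination (-4 * Real.sinh (Real.log (p * c / (q * b)) / 2) *
    Real.sinh (Real.log (b * u / (c * v)) / 2)) * hsqrt

theorem Finset.sum_sum_sub_mul_sub_eq_zero {V : Type*} [Fintype V] (h : V → ℝ)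
    (j : V → V → ℝ) (hj : ∀ x, ∑ y, j x y = ∑ y, j y x) :
    ∑ x, ∑ y, (h x - h y) * (j x y - j y x) = 0 := by
  have hswap : ∑ x, ∑ y, h y * (j x y - j y x) = -∑ x, ∑ y, h x * (j x y - j y x) := by
    rw [sum_comm]
    simp only [← sum_neg_distrib, neg_mul_eq_mul_neg, neg_sub]
  have hdiv : ∑ x, ∑ y, h x * (j x y - j y x) = 0 := by
    simp [← mul_sum, sum_sub_distrib, hj]
  simp only [sub_mul, sum_sub_distrib, hswap, hdiv, neg_zero, sub_zero]

theorem Real.mul_cosh_half_add_sub_one (a s t : ℝ) :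
    a * (Real.cosh ((s + t) / 2) - 1) =
      a * Real.cosh (t / 2) * (Real.cosh (s / 2) - 1) + a * (Real.cosh (t / 2) - 1) +
        a * Real.sinh (s / 2) * Real.sinh (t / 2) := by
  rw [add_div, Real.cosh_add]
  ring

/-- Lemma 2 (splitting of `Ψ*`): with `Ψ*(ρ,f) = ∑_{xy} a_{xy}(ρ)(cosh(f_{xy}/2) - 1)`,
`Ψ*_S(ρ,f) = ∑_{xy} a^S_{xy}(ρ)(cosh(f_{xy}/2) - 1)` where
`a^S_{xy}(ρ) = a_{xy}(ρ) cosh(F^A_{xy}/2)`, and `F(ρ) = F^S(ρ) + F^A`, one has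
`Ψ*(ρ,F(ρ)) = Ψ*_S(ρ,F^S(ρ)) + Ψ*(ρ,F^A)`. -/
theorem psistar_splitting {V : Type*} [Fintype V]
    (r : V → V → ℝ) (π ρ : V → ℝ)
    (hr : ∀ x y, 0 ≤ r x y) (hsym : ∀ x y, 0 < r x y ↔ 0 < r y x)
    (hπpos : ∀ x, 0 < π x) (hρpos : ∀ x, 0 < ρ x)
    (hinv : ∀ x, ∑ y, π x * r x y = ∑ y, π y * r y x)
    -- mobility, symmetric force, antisymmetric force
    (a FS FA : V → V → ℝ)
    (ha : ∀ x y, a x y = 2 * Real.sqrt (ρ x * r x y * (ρ y * r y x)))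
    (hFS : ∀ x y, FS x y = Real.log (ρ x * π y / (ρ y * π x)))
    (hFA : ∀ x y, FA x y = Real.log ((π x * r x y) / (π y * r y x))) :
    ∑ x, ∑ y, a x y * (Real.cosh ((FS x y + FA x y) / 2) - 1) =
      (∑ x, ∑ y, (a x y * Real.cosh (FA x y / 2)) * (Real.cosh (FS x y / 2) - 1))
        + ∑ x, ∑ y, a x y * (Real.cosh (FA x y / 2) - 1) := by
  have hcross : ∀ x y, a x y * Real.sinh (FS x y / 2) * Real.sinh (FA x y / 2) =
      (ρ x / π x - ρ y / π y) * (π x * r x y - π y * r y x) / 2 := fun x y => by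
    rw [ha, hFS, hFA]
    exact Real.two_mul_sqrt_mul_sinh_mul_sinh_half_log (hρpos x) (hρpos y) (hπpos x) (hπpos y)
      (hr x y) (hr y x) (hsym x y)
  have horth : ∑ x, ∑ y, a x y * Real.sinh (FS x y / 2) * Real.sinh (FA x y / 2) = 0 := by
    simp only [hcross, ← sum_div, sum_sum_sub_mul_sub_eq_zero _ _ hinv, zero_div]
  simp only [Real.mul_cosh_half_add_sub_one, sum_add_distrib, horth, add_zero]
end

section
/- Generalized orthogonality of forces (Proposition 1): under the setting of Lemma 1, Ψ*(ρ, F^S(ρ) + F^A) = Ψ*(ρ, F^S(ρ) − F^A), where Ψ*(ρ, f) = ∑_{xy} a_{xy}(ρ)(cosh(f_{xy}/2) − 1). -/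
open Finset

/-!
With the one-way fluxes `α = ρ(x) r_{xy}` and `β = ρ(y) r_{yx}` one has `a_{xy} = 2√(αβ)` and
`F^S + F^A = log (α / β)`, so the summand of `Ψ*(ρ, F^S + F^A)` is `α + β - a_{xy}`.
Likewise `F^S - F^A = log (γ / δ)` for the fluxes `γ = ρ(x) π(y) r_{yx} / π(x)`,
`δ = ρ(y) π(x) r_{xy} / π(y)` of the time-reversed chain, and `γδ = αβ`.
Stationarity of `π` says exactly that the total fluxes of the chain and of its reversal agree.
-/

namespace Real

theorem two_mul_sqrt_mul_mul_cosh_half_log_div {α β : ℝ} (hα : 0 < α) (hβ : 0 < β) :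
    2 * √(α * β) * cosh (log (α / β) / 2) = α + β := by
  obtain ⟨p, hp, rfl⟩ : ∃ p, 0 < p ∧ p ^ 2 = α := ⟨√α, sqrt_pos.2 hα, sq_sqrt hα.le⟩
  obtain ⟨q, hq, rfl⟩ : ∃ q, 0 < q ∧ q ^ 2 = β := ⟨√β, sqrt_pos.2 hβ, sq_sqrt hβ.le⟩
  have hsqrt : √(p ^ 2 * q ^ 2) = p * q := by
    rw [← mul_pow, sqrt_sq (by positivity)]
  have hlog : log (p ^ 2 / q ^ 2) / 2 = log (p / q) := by
    rw [← div_pow, log_pow]; push_cast; ring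
  rw [hsqrt, hlog, cosh_log (by positivity)]
  field_simp

theorem two_mul_sqrt_mul_mul_cosh_half_log_div_sub_one {α β : ℝ} (hα : 0 ≤ α) (hβ : 0 ≤ β)
    (hαβ : 0 < α ↔ 0 < β) :
    2 * √(α * β) * (cosh (log (α / β) / 2) - 1) = α + β - 2 * √(α * β) := by
  rcases hα.lt_or_eq with hα | rfl
  · rw [mul_sub, two_mul_sqrt_mul_mul_cosh_half_log_div hα (hαβ.1 hα), mul_one]
  · obtain rfl : β = 0 := by
      by_contra hβ0
      exact lt_irrefl 0 (hαβ.2 (hβ.lt_of_ne' hβ0))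
    simp

end Real

section MarkovChain

variable {V : Type*} {r : V → V → ℝ} {π ρ : V → ℝ}

theorem sum_mul_rate_eq_sum_mul_reversed_rate [Fintype V] (hπ : ∀ x, π x ≠ 0)
    (hinv : ∀ x, ∑ y, π x * r x y = ∑ y, π y * r y x) :
    ∑ x, ∑ y, ρ x * r x y = ∑ x, ∑ y, ρ x / π x * (π y * r y x) := by
  refine sum_congr rfl fun x _ => ?_
  rw [← mul_sum, ← mul_sum, ← hinv x, ← mul_sum]
  field_simp [hπ x]

theorem two_mul_sqrt_mul_cosh_half_add_sub_one (hr : ∀ x y, 0 ≤ r x y)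
    (hsym : ∀ x y, 0 < r x y ↔ 0 < r y x) (hπ : ∀ x, 0 < π x) (hρ : ∀ x, 0 < ρ x) (x y : V) :
    2 * √(ρ x * r x y * (ρ y * r y x)) *
        (Real.cosh ((Real.log (ρ x * π y / (ρ y * π x)) +
          Real.log (π x * r x y / (π y * r y x))) / 2) - 1) =
      ρ x * r x y + ρ y * r y x - 2 * √(ρ x * r x y * (ρ y * r y x)) := by
  by_cases hxy : 0 < r x y
  · have hyx := (hsym x y).1 hxy
    have := hπ x; have := hπ y; have := hρ x; have := hρ y
    rw [← Real.log_mul (by positivity) (by positivity)]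
    have hflux : ρ x * π y / (ρ y * π x) * (π x * r x y / (π y * r y x)) =
        ρ x * r x y / (ρ y * r y x) := by
      field_simp
    rw [hflux]
    exact Real.two_mul_sqrt_mul_mul_cosh_half_log_div_sub_one (by positivity) (by positivity)
      (by simp [hρ, hxy, hyx])
  · have hxy0 : r x y = 0 := (not_lt.1 hxy).antisymm (hr x y)
    have hyx0 : r y x = 0 := ((not_congr (hsym x y)).1 hxy |> not_lt.1).antisymm (hr y x)
    simp [hxy0, hyx0]

theorem two_mul_sqrt_mul_cosh_half_sub_sub_one (hr : ∀ x y, 0 ≤ r x y)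
    (hsym : ∀ x y, 0 < r x y ↔ 0 < r y x) (hπ : ∀ x, 0 < π x) (hρ : ∀ x, 0 < ρ x) (x y : V) :
    2 * √(ρ x * r x y * (ρ y * r y x)) *
        (Real.cosh ((Real.log (ρ x * π y / (ρ y * π x)) -
          Real.log (π x * r x y / (π y * r y x))) / 2) - 1) =
      ρ x / π x * (π y * r y x) + ρ y / π y * (π x * r x y) -
        2 * √(ρ x * r x y * (ρ y * r y x)) := by
  by_cases hxy : 0 < r x y
  · have hyx := (hsym x y).1 hxy
    have := hπ x; have := hπ y; have := hρ x; have := hρ y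
    rw [← Real.log_div (by positivity) (by positivity)]
    have hflux : ρ x * π y / (ρ y * π x) / (π x * r x y / (π y * r y x)) =
        ρ x / π x * (π y * r y x) / (ρ y / π y * (π x * r x y)) := by
      field_simp
    have hprod : ρ x * r x y * (ρ y * r y x) =
        ρ x / π x * (π y * r y x) * (ρ y / π y * (π x * r x y)) := by
      field_simp
    rw [hflux, hprod]
    exact Real.two_mul_sqrt_mul_mul_cosh_half_log_div_sub_one (by positivity) (by positivity)
      (by simp [hρ, hπ, hxy, hyx])
  · have hxy0 : r x y = 0 := (not_lt.1 hxy).antisymm (hr x y)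
    have hyx0 : r y x = 0 := ((not_congr (hsym x y)).1 hxy |> not_lt.1).antisymm (hr y x)
    simp [hxy0, hyx0]

end MarkovChain

/-- Proposition 1 (generalised orthogonality of forces):
`Ψ*(ρ, F^S(ρ) + F^A) = Ψ*(ρ, F^S(ρ) - F^A)` where
`Ψ*(ρ, f) = ∑_{xy} a_{xy}(ρ)(cosh(f_{xy}/2) - 1)`. -/
theorem generalized_orthogonality_forces {V : Type*} [Fintype V]
    (r : V → V → ℝ) (π ρ : V → ℝ)
    (hr : ∀ x y, 0 ≤ r x y) (hsym : ∀ x y, 0 < r x y ↔ 0 < r y x)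
    (hπpos : ∀ x, 0 < π x) (hρpos : ∀ x, 0 < ρ x)
    (hinv : ∀ x, ∑ y, π x * r x y = ∑ y, π y * r y x)
    (a FS FA : V → V → ℝ)
    (ha : ∀ x y, a x y = 2 * Real.sqrt (ρ x * r x y * (ρ y * r y x)))
    (hFS : ∀ x y, FS x y = Real.log (ρ x * π y / (ρ y * π x)))
    (hFA : ∀ x y, FA x y = Real.log ((π x * r x y) / (π y * r y x))) :
    ∑ x, ∑ y, a x y * (Real.cosh ((FS x y + FA x y) / 2) - 1) =
      ∑ x, ∑ y, a x y * (Real.cosh ((FS x y - FA x y) / 2) - 1) := by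
  simp only [ha, hFS, hFA, two_mul_sqrt_mul_cosh_half_add_sub_one hr hsym hπpos hρpos,
    two_mul_sqrt_mul_cosh_half_sub_sub_one hr hsym hπpos hρpos, sum_sub_distrib, sum_add_distrib]
  have hforward := sum_mul_rate_eq_sum_mul_reversed_rate (ρ := ρ) (fun x => (hπpos x).ne') hinv
  have hbackward : ∑ x, ∑ y, ρ y * r y x = ∑ x, ∑ y, ρ y / π y * (π x * r x y) := by
    rw [sum_comm, hforward, sum_comm]
  rw [hforward, hbackward]
end

section
/- Finite-time Gallavotti–Cohen symmetry of the rate function: with I_{[0,T]}((ρ, j)) = F(ρ_0) + (1/2)∫_0^T Φ(ρ_t, j_t, F(ρ_t)) dt (for paths with ρ̇ + div j = 0) and the time-reversed path (ρ*_t, j*_t) = (ρ_{T−t}, −j_{T−t}), one has I_{[0,T]}((ρ, j)) − I_{[0,T]}((ρ*, j*)) = F(ρ_0) − F(ρ_T) − ∫_0^T j_t · F(ρ_t) dt. -/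
/-!
Substituting `t ↦ T - t` in the integral of the reversed path, the driving force `F(ρ*_t)` is
`F(ρ_t)` again and `Ψ` does not see the sign of the flux, so the two Lagrangians differ only
through the pairing, which changes sign: `Φ(ρ, -j, f) = Φ(ρ, j, f) + 2 j·f`. The free-energy
terms are the two endpoints of the path, swapped.
-/

open Finset intervalIntegral

/-- Dual pairing `j·f = (1/2) ∑_{xy} j_{xy} f_{xy}`. -/
noncomputable def pairF {V : Type*} [Fintype V] (j f : V → V → ℝ) : ℝ :=
  (1 / 2) * ∑ x, ∑ y, j x y * f x y

lemma pairF_neg_left {V : Type*} [Fintype V] (u f : V → V → ℝ) :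
    pairF (fun x y => -(u x y)) f = -pairF u f := by
  simp only [pairF, neg_mul, Finset.sum_neg_distrib, mul_neg]

lemma Phi_neg_flux {V : Type*} [Fintype V] {Psi PsiStar : (V → ℝ) → (V → V → ℝ) → ℝ}
    (hPsiEven : ∀ μ u, Psi μ (fun x y => -(u x y)) = Psi μ u) (μ : V → ℝ) (u f : V → V → ℝ) :
    Psi μ (fun x y => -(u x y)) - pairF (fun x y => -(u x y)) f + PsiStar μ f
      = Psi μ u - pairF u f + PsiStar μ f + 2 * pairF u f := by
  rw [hPsiEven, pairF_neg_left]
  ring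

lemma integral_comp_sub_left_add_two_mul {g p : ℝ → ℝ} {T : ℝ}
    (hg : IntervalIntegrable g MeasureTheory.volume 0 T)
    (hp : IntervalIntegrable p MeasureTheory.volume 0 T) :
    ∫ t in (0:ℝ)..T, (g (T - t) + 2 * p (T - t))
      = (∫ t in (0:ℝ)..T, g t) + 2 * ∫ t in (0:ℝ)..T, p t := by
  rw [intervalIntegral.integral_comp_sub_left (fun t => g t + 2 * p t) T, sub_self, sub_zero,
    integral_add hg (hp.const_mul 2), integral_const_mul]

theorem gallavotti_cohen_finite_time_general {V : Type*} [Fintype V]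
    (r : V → V → ℝ) (π : V → ℝ)
    (Psi PsiStar : (V → ℝ) → (V → V → ℝ) → ℝ)
    (hPsiEven : ∀ μ u, Psi μ (fun x y => -(u x y)) = Psi μ u)
    (T : ℝ)
    (ρ : ℝ → V → ℝ) (j : ℝ → V → V → ℝ)
    -- regularity ensuring integrability of all the integrands along the path
    (hc1 : Continuous fun t => Psi (ρ t) (j t))
    (hc2 : Continuous fun t =>
      PsiStar (ρ t) (fun x y => Real.log (ρ t x * r x y / (ρ t y * r y x))))
    (hc3 : Continuous fun t =>
      pairF (j t) (fun x y => Real.log (ρ t x * r x y / (ρ t y * r y x)))) :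
    ((∑ x, ρ 0 x * Real.log (ρ 0 x / π x)) +
        (1 / 2) * ∫ t in (0:ℝ)..T,
          (Psi (ρ t) (j t)
            - pairF (j t) (fun x y => Real.log (ρ t x * r x y / (ρ t y * r y x)))
            + PsiStar (ρ t) (fun x y => Real.log (ρ t x * r x y / (ρ t y * r y x)))))
      - ((∑ x, ρ T x * Real.log (ρ T x / π x)) +
        (1 / 2) * ∫ t in (0:ℝ)..T,
          (Psi (ρ (T - t)) (fun x y => -(j (T - t) x y))
            - pairF (fun x y => -(j (T - t) x y))
                (fun x y => Real.log (ρ (T - t) x * r x y / (ρ (T - t) y * r y x)))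
            + PsiStar (ρ (T - t))
                (fun x y => Real.log (ρ (T - t) x * r x y / (ρ (T - t) y * r y x)))))
      = (∑ x, ρ 0 x * Real.log (ρ 0 x / π x))
        - (∑ x, ρ T x * Real.log (ρ T x / π x))
        - ∫ t in (0:ℝ)..T,
            pairF (j t) (fun x y => Real.log (ρ t x * r x y / (ρ t y * r y x))) := by
  simp only [Phi_neg_flux hPsiEven]
  set F : ℝ → V → V → ℝ := fun t x y => Real.log (ρ t x * r x y / (ρ t y * r y x))
  set Phi : ℝ → ℝ := fun t => Psi (ρ t) (j t) - pairF (j t) (F t) + PsiStar (ρ t) (F t)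
  have hPhi : IntervalIntegrable Phi MeasureTheory.volume 0 T :=
    ((hc1.sub hc3).add hc2).intervalIntegrable 0 T
  rw [integral_comp_sub_left_add_two_mul (g := Phi) hPhi (hc3.intervalIntegrable 0 T)]
  ring

/-- Finite-time Gallavotti–Cohen symmetry: for the pathwise rate functional
`I = 𝓕(ρ_0) + (1/2)∫_0^T Φ(ρ_t, j_t, F(ρ_t)) dt` with
`Φ(ρ,j,f) = Ψ(ρ,j) - j·f + Ψ*(ρ,f)` and `Ψ, Ψ*` even in their second argument,
the difference between the rate functional of a path and of its time-reversal
`(ρ*_t, j*_t) = (ρ_{T-t}, -j_{T-t})` equals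
`𝓕(ρ_0) - 𝓕(ρ_T) - ∫_0^T j_t · F(ρ_t) dt`. -/
theorem gallavotti_cohen_finite_time {V : Type*} [Fintype V]
    (r : V → V → ℝ) (π : V → ℝ)
    (hr : ∀ x y, 0 ≤ r x y) (hsym : ∀ x y, 0 < r x y ↔ 0 < r y x)
    (hπpos : ∀ x, 0 < π x)
    (Psi PsiStar : (V → ℝ) → (V → V → ℝ) → ℝ)
    (hPsiEven : ∀ μ u, Psi μ (fun x y => -(u x y)) = Psi μ u)
    (hPsiStarEven : ∀ μ u, PsiStar μ (fun x y => -(u x y)) = PsiStar μ u)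
    (T : ℝ) (hT : 0 ≤ T)
    (ρ : ℝ → V → ℝ) (j : ℝ → V → V → ℝ)
    (hρpos : ∀ t x, 0 < ρ t x)
    (hjanti : ∀ t x y, j t x y = - j t y x)
    (hcontinuity : ∀ t x, HasDerivAt (fun s => ρ s x) (-∑ y, j t x y) t)
    -- regularity ensuring integrability of all the integrands along the path
    (hc1 : Continuous fun t => Psi (ρ t) (j t))
    (hc2 : Continuous fun t =>
      PsiStar (ρ t) (fun x y => Real.log (ρ t x * r x y / (ρ t y * r y x))))
    (hc3 : Continuous fun t =>
      pairF (j t) (fun x y => Real.log (ρ t x * r x y / (ρ t y * r y x)))) :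
    ((∑ x, ρ 0 x * Real.log (ρ 0 x / π x)) +
        (1 / 2) * ∫ t in (0:ℝ)..T,
          (Psi (ρ t) (j t)
            - pairF (j t) (fun x y => Real.log (ρ t x * r x y / (ρ t y * r y x)))
            + PsiStar (ρ t) (fun x y => Real.log (ρ t x * r x y / (ρ t y * r y x)))))
      - ((∑ x, ρ T x * Real.log (ρ T x / π x)) +
        (1 / 2) * ∫ t in (0:ℝ)..T,
          (Psi (ρ (T - t)) (fun x y => -(j (T - t) x y))
            - pairF (fun x y => -(j (T - t) x y))
                (fun x y => Real.log (ρ (T - t) x * r x y / (ρ (T - t) y * r y x)))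
            + PsiStar (ρ (T - t))
                (fun x y => Real.log (ρ (T - t) x * r x y / (ρ (T - t) y * r y x)))))
      = (∑ x, ρ 0 x * Real.log (ρ 0 x / π x))
        - (∑ x, ρ T x * Real.log (ρ T x / π x))
        - ∫ t in (0:ℝ)..T,
            pairF (j t) (fun x y => Real.log (ρ t x * r x y / (ρ t y * r y x))) :=
  gallavotti_cohen_finite_time_general r π Psi PsiStar hPsiEven T ρ j hc1 hc2 hc3
end
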